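/- For any x ∈ (0,1), Γ(x, 1-x) ≤ π / sin(πx). -/

import Mathlib

open Real Set intervalIntegral

noncomputable def biGamma (x y : ℝ) : ℝ :=
  ∫ t in (0:ℝ)..1, (-Real.log t) ^ (x - 1) * (-Real.log (1 - t)) ^ (y - 1)

/-!
Since `log s ≤ s - 1`, on `(0, 1)` we have `1 - t ≤ -log t` and `t ≤ -log (1 - t)`.
Both exponents of `Γ(x, 1 - x)` are negative, so its integrand is bounded by the Beta integrand
`t ^ (-x) * (1 - t) ^ (x - 1)`, whose integral is `Γ(1 - x) Γ(x) = π / sin (π x)`.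
-/

namespace Real

open MeasureTheory

lemma ofReal_rpow_mul_one_sub_rpow {a b t : ℝ} (ht : t ∈ uIcc (0:ℝ) 1) :
    (((t ^ (a - 1) * (1 - t) ^ (b - 1) : ℝ)) : ℂ)
      = (t : ℂ) ^ ((a : ℂ) - 1) * (1 - (t : ℂ)) ^ ((b : ℂ) - 1) := by
  rw [uIcc_of_le zero_le_one] at ht
  push_cast [Complex.ofReal_mul, Complex.ofReal_cpow ht.1,
    Complex.ofReal_cpow (sub_nonneg.mpr ht.2)]
  rfl

lemma intervalIntegrable_rpow_mul_one_sub_rpow {a b : ℝ} (ha : 0 < a) (hb : 0 < b) :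
    IntervalIntegrable (fun t : ℝ => t ^ (a - 1) * (1 - t) ^ (b - 1)) volume 0 1 := by
  have hℂ := (Complex.betaIntegral_convergent (u := a) (v := b) (by simpa) (by simpa)).congr
    fun t ht => (ofReal_rpow_mul_one_sub_rpow (uIoc_subset_uIcc ht)).symm
  rw [intervalIntegrable_iff] at hℂ ⊢
  simpa [IntegrableOn] using hℂ.re

lemma integral_rpow_mul_one_sub_rpow {a b : ℝ} (ha : 0 < a) (hb : 0 < b) :
    ∫ t in (0:ℝ)..1, t ^ (a - 1) * (1 - t) ^ (b - 1) = Gamma a * Gamma b / Gamma (a + b) := by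
  have hB := Complex.Gamma_mul_Gamma_eq_betaIntegral (s := a) (t := b) (by simpa) (by simpa)
  rw [Complex.betaIntegral, ← integral_congr fun t ht =>
    ofReal_rpow_mul_one_sub_rpow (a := a) (b := b) ht, integral_ofReal, ← Complex.ofReal_add]
    at hB
  simp only [Complex.Gamma_ofReal] at hB
  rw [eq_div_iff (Gamma_pos_of_pos (add_pos ha hb)).ne', mul_comm]
  exact_mod_cast hB.symm

lemma rpow_neg_log_le_rpow_one_sub {t p : ℝ} (ht : t ∈ Ioo (0:ℝ) 1) (hp : p ≤ 0) :
    (-log t) ^ p ≤ (1 - t) ^ p :=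
  rpow_le_rpow_of_nonpos (by linarith [ht.2]) (by linarith [log_le_sub_one_of_pos ht.1]) hp

lemma rpow_neg_log_mul_rpow_neg_log_one_sub_le {t p q : ℝ} (ht : t ∈ Ioo (0:ℝ) 1)
    (hp : p ≤ 0) (hq : q ≤ 0) : (-log t) ^ p * (-log (1 - t)) ^ q ≤ t ^ q * (1 - t) ^ p := by
  have ht' : 1 - t ∈ Ioo (0:ℝ) 1 := ⟨by linarith [ht.2], by linarith [ht.1]⟩
  have hq_le : (-log (1 - t)) ^ q ≤ t ^ q := by
    simpa using rpow_neg_log_le_rpow_one_sub ht' hq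
  rw [mul_comm (t ^ q)]
  exact mul_le_mul (rpow_neg_log_le_rpow_one_sub ht hp) hq_le
    (rpow_nonneg (neg_nonneg.mpr (log_nonpos ht'.1.le ht'.2.le)) q) (rpow_nonneg ht'.1.le p)

lemma rpow_neg_log_mul_rpow_neg_log_one_sub_nonneg {t p q : ℝ} (ht : t ∈ Ioo (0:ℝ) 1) :
    0 ≤ (-log t) ^ p * (-log (1 - t)) ^ q := by
  have h₁ : 0 ≤ -log t := neg_nonneg.mpr (log_nonpos ht.1.le ht.2.le)
  have h₂ : 0 ≤ -log (1 - t) :=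
    neg_nonneg.mpr (log_nonpos (by linarith [ht.2]) (by linarith [ht.1]))
  positivity

end Real

namespace intervalIntegral

open MeasureTheory

/-- `f` need not be integrable: if it is not, its integral is the junk value `0`. -/
lemma integral_mono_of_nonneg_on_Ioo {f g : ℝ → ℝ} {a b : ℝ} (hab : a ≤ b)
    (hg : IntervalIntegrable g volume a b) (hf : ∀ t ∈ Ioo a b, 0 ≤ f t)
    (hfg : ∀ t ∈ Ioo a b, f t ≤ g t) :
    ∫ t in a..b, f t ≤ ∫ t in a..b, g t := by
  simp only [integral_of_le hab, integral_Ioc_eq_integral_Ioo]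
  exact integral_mono_of_nonneg (ae_restrict_of_forall_mem measurableSet_Ioo hf)
    (hg.1.mono_set Ioo_subset_Ioc_self) (ae_restrict_of_forall_mem measurableSet_Ioo hfg)

end intervalIntegral

theorem biGamma_reflection_le (x : ℝ) (hx : x ∈ Set.Ioo (0:ℝ) 1) :
    biGamma x (1 - x) ≤ Real.pi / Real.sin (Real.pi * x) := by
  obtain ⟨hx0, hx1⟩ := hx
  calc biGamma x (1 - x)
      ≤ ∫ t in (0:ℝ)..1, t ^ (1 - x - 1) * (1 - t) ^ (x - 1) :=
        integral_mono_of_nonneg_on_Ioo zero_le_one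
          (intervalIntegrable_rpow_mul_one_sub_rpow (by linarith) hx0)
          (fun t ht => rpow_neg_log_mul_rpow_neg_log_one_sub_nonneg ht)
          (fun t ht => rpow_neg_log_mul_rpow_neg_log_one_sub_le ht (by linarith) (by linarith))
    _ = Gamma (1 - x) * Gamma x / Gamma (1 - x + x) :=
        integral_rpow_mul_one_sub_rpow (by linarith) hx0
    _ = Real.pi / Real.sin (Real.pi * x) := by
        rw [sub_add_cancel, Gamma_one, div_one, mul_comm, Gamma_mul_Gamma_one_sub]
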